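/- Let G be a finite simple graph and f a uniformly random labeling with fixed label counts. For distinct labels i != j, Cov(R_{ii}, R_{ij}) = (sum_t |G_t|^2 - 2|G|) * n_i n_j (n_i-1)/(N(N-1)(N-2)) + 2(|G|^2 - sum_t |G_t|^2 + |G|) * n_i n_j (n_i-1)(n_i-2)/(N(N-1)(N-2)(N-3)) - E(R_{ii}) E(R_{ij}). -/

import Mathlib

open Finset

variable {V : Type*} [Fintype V] [DecidableEq V] {K : ℕ}

/-- The set of labelings `f : V → Fin K` with exactly `n k` vertices labeled `k`. -/
def labelings (n : Fin K → ℕ) : Finset (V → Fin K) :=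
  Finset.univ.filter fun f => ∀ k, (Finset.univ.filter fun x => f x = k).card = n k

/-- Probability of an event under the uniform distribution on `labelings n`. -/
noncomputable def prob (n : Fin K → ℕ) (P : (V → Fin K) → Prop) [DecidablePred P] : ℝ :=
  (((labelings n).filter P).card : ℝ) / (((labelings n : Finset (V → Fin K))).card : ℝ)

/-- Expectation of a real random variable under the uniform distribution on `labelings n`. -/
noncomputable def expect (n : Fin K → ℕ) (X : (V → Fin K) → ℝ) : ℝ :=
  (∑ f ∈ labelings n, X f) / (((labelings n : Finset (V → Fin K))).card : ℝ)

/-- Covariance under the uniform distribution on `labelings n`. -/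
noncomputable def covar (n : Fin K → ℕ) (X Y : (V → Fin K) → ℝ) : ℝ :=
  expect n (fun f => (X f - expect n X) * (Y f - expect n Y))

/-- `Rcount G f i j` is the number of edges of `G` whose endpoint labels (under `f`)
are exactly the unordered pair `{i, j}`. -/
def Rcount (G : SimpleGraph V) [DecidableRel G.Adj] (f : V → Fin K) (i j : Fin K) : ℕ :=
  (G.edgeFinset.filter fun e => Sym2.map f e = s(i, j)).card

/-!
Write `R_ii` and `R_ij` as sums of indicators over the darts (oriented edges) of `G`; each
indicator event prescribes the labels of at most four distinct vertices. The permutations of `V`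
preserve the uniform law and act transitively on injective tuples, so double counting the pairs
(labeling, tuple) shows that an injective `r`-tuple carries prescribed labels with probability
`∏ₖ (n k)_(r k) / (N)_r` (falling factorials). In `E(R_ii R_ij)` a pair of darts `(a, b)`,
`(c, e)` contributes only when `e ∉ {a, b}`: for `c ∈ {a, b}` it is a three-vertex event, and
there are `deg a + deg b - 2` such darts `(c, e)`; otherwise it is a four-vertex event, and there
are `2|G| - 2 deg a - 2 deg b + 2` of those. Summing over `(a, b)` produces `∑ₜ |G_t|²`.
-/

section Labelings

variable {n : Fin K → ℕ}

lemma mem_labelings {f : V → Fin K} : f ∈ labelings n ↔ ∀ k, #{x | f x = k} = n k := by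
  simp [labelings]

lemma labelings_nonempty (hsum : ∑ k, n k = Fintype.card V) :
    (labelings (V := V) n).Nonempty := by
  obtain ⟨φ⟩ : Nonempty (V ≃ Σ k, Fin (n k)) := Fintype.card_eq.mp (by simp [hsum])
  refine ⟨fun v => (φ v).1, mem_labelings.mpr fun k => ?_⟩
  simp only [card_filter, ← φ.symm.sum_comp, Equiv.apply_symm_apply, Fintype.sum_sigma]
  simp [apply_ite]

lemma comp_mem_labelings (σ : Equiv.Perm V) {f : V → Fin K} (hf : f ∈ labelings n) :
    f ∘ σ ∈ labelings n := by
  rw [mem_labelings] at hf ⊢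
  intro k
  rw [← hf k]
  simp only [← Fintype.card_subtype]
  exact Fintype.card_congr (σ.subtypeEquiv fun _ => Iff.rfl)

lemma card_filter_labelings_comp (σ : Equiv.Perm V) (P : (V → Fin K) → Prop)
    [DecidablePred P] :
    #{f ∈ labelings n | P (f ∘ σ)} = #{f ∈ labelings n | P f} := by
  refine card_nbij' (· ∘ σ) (· ∘ σ.symm) ?_ ?_ (fun f _ => by ext; simp)
    (fun f _ => by ext; simp)
  · intro f hf
    simp only [coe_filter] at hf ⊢
    exact ⟨comp_mem_labelings σ hf.1, hf.2⟩
  · intro f hf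
    simp only [coe_filter] at hf ⊢
    refine ⟨comp_mem_labelings σ.symm hf.1, ?_⟩
    simpa [Function.comp_def] using hf.2

variable {ι : Type*} [Fintype ι]

lemma card_filter_labelings_pattern_eq (c : ι → Fin K) (e e' : ι ↪ V) :
    #{f ∈ labelings n | ∀ t, f (e t) = c t} = #{f ∈ labelings n | ∀ t, f (e' t) = c t} := by
  obtain ⟨σ, hσ⟩ := Equiv.Perm.exists_smul_eq_embedding e e'
  have he' : ∀ t, e' t = σ (e t) := fun t => by rw [← hσ]; rfl
  simp only [he']
  exact (card_filter_labelings_comp σ fun f => ∀ t, f (e t) = c t).symm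

def fiberwiseEmbeddingEquiv (f : V → Fin K) (c : ι → Fin K) :
    {e : ι ↪ V // ∀ t, f (e t) = c t} ≃ ∀ k, ({t // c t = k} ↪ {v // f v = k}) where
  toFun e k := ⟨fun t => ⟨e.1 t, (e.2 t).trans t.2⟩,
    fun _ _ h => Subtype.ext (e.1.injective (congrArg Subtype.val h))⟩
  invFun E := ⟨((Equiv.sigmaFiberEquiv c).symm.toEmbedding.trans
      (Function.Embedding.sigmaMap (Function.Embedding.refl _) E)).trans
      (Equiv.sigmaFiberEquiv f).toEmbedding, fun t => (E (c t) ⟨t, rfl⟩).2⟩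
  left_inv _ := rfl
  right_inv E := by
    funext k
    ext ⟨t, rfl⟩
    rfl

lemma card_fiberwise_embeddings {f : V → Fin K} (hf : f ∈ labelings n) (c : ι → Fin K) :
    Fintype.card {e : ι ↪ V // ∀ t, f (e t) = c t}
      = ∏ k, (n k).descFactorial #{t | c t = k} := by
  rw [Fintype.card_congr (fiberwiseEmbeddingEquiv f c), Fintype.card_pi]
  refine prod_congr rfl fun k _ => ?_
  rw [Fintype.card_embedding_eq, Fintype.card_subtype, Fintype.card_subtype, mem_labelings.mp hf k]

lemma card_filter_labelings_pattern_mul (c : ι → Fin K) (e : ι ↪ V) :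
    #{f ∈ labelings n | ∀ t, f (e t) = c t} * (Fintype.card V).descFactorial (Fintype.card ι)
      = #(labelings (V := V) n) * ∏ k, (n k).descFactorial #{t | c t = k} := by
  have hdouble := sum_card_bipartiteAbove_eq_sum_card_bipartiteBelow (α := ι ↪ V)
    (fun e (f : V → Fin K) => ∀ t, f (e t) = c t) (s := univ) (t := labelings n)
  simp only [bipartiteAbove, bipartiteBelow] at hdouble
  rw [sum_congr rfl fun e' _ => card_filter_labelings_pattern_eq c e' e, sum_const, card_univ,
    Fintype.card_embedding_eq, smul_eq_mul] at hdouble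
  rw [mul_comm, hdouble, ← smul_eq_mul, ← sum_const]
  refine sum_congr rfl fun f hf => ?_
  rw [← card_fiberwise_embeddings hf c, Fintype.card_subtype]

end Labelings

section Probability

variable {n : Fin K → ℕ}

lemma expect_sum {α : Type*} (s : Finset α) (X : α → (V → Fin K) → ℝ) :
    expect n (fun f => ∑ d ∈ s, X d f) = ∑ d ∈ s, expect n (X d) := by
  simp only [_root_.expect, sum_comm (s := labelings n), sum_div]

lemma expect_const_mul (c : ℝ) (X : (V → Fin K) → ℝ) :
    expect n (fun f => c * X f) = c * expect n X := by
  simp only [_root_.expect, ← mul_sum, mul_div_assoc]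

lemma expect_indicator (P : (V → Fin K) → Prop) [DecidablePred P] :
    expect n (fun f => if P f then 1 else 0) = prob n P := by
  simp [_root_.expect, prob, sum_boole]

lemma covar_eq_expect_mul_sub (X Y : (V → Fin K) → ℝ) :
    covar n X Y = expect n (fun f => X f * Y f) - expect n X * expect n Y := by
  rcases eq_or_ne (#(labelings (V := V) n) : ℝ) 0 with h | h
  · simp [covar, _root_.expect, h]
  · simp only [covar, _root_.expect, sub_mul, mul_sub, sum_sub_distrib, ← sum_mul, ← mul_sum,
      sum_const, nsmul_eq_mul]
    field_simp
    ring

variable {ι : Type*} [Fintype ι]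

lemma prob_congr {P Q : (V → Fin K) → Prop} [DecidablePred P] [DecidablePred Q]
    (h : ∀ f, P f ↔ Q f) : prob n P = prob n Q := by
  simp only [prob, h]

lemma prob_eq_zero_of_forall_not {P : (V → Fin K) → Prop} [DecidablePred P] (h : ∀ f, ¬P f) :
    prob n P = 0 := by
  simp [prob, h]

lemma prob_pattern (hsum : ∑ k, n k = Fintype.card V) (c : ι → Fin K) (e : ι ↪ V) :
    prob n (fun f => ∀ t, f (e t) = c t)
      = (∏ k, (n k).descFactorial #{t | c t = k} : ℕ)
        / ((Fintype.card V).descFactorial (Fintype.card ι) : ℝ) := by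
  have hL : (#(labelings (V := V) n) : ℝ) ≠ 0 := by
    exact_mod_cast (labelings_nonempty hsum).card_pos.ne'
  have hD : ((Fintype.card V).descFactorial (Fintype.card ι) : ℝ) ≠ 0 := by
    exact_mod_cast (Nat.descFactorial_eq_zero_iff_lt.not.mpr
      (not_lt.mpr (Fintype.card_le_of_embedding e)))
  rw [prob, div_eq_div_iff hL hD, mul_comm (_ : ℝ) (#(labelings n) : ℝ)]
  exact_mod_cast card_filter_labelings_pattern_mul c e

lemma prob_pattern_of_mem (hsum : ∑ k, n k = Fintype.card V) (c : ι → Fin K) (e : ι ↪ V)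
    (S : Finset (Fin K)) (hc : ∀ t, c t ∈ S) :
    prob n (fun f => ∀ t, f (e t) = c t)
      = (∏ k ∈ S, (n k).descFactorial #{t | c t = k} : ℕ)
        / ((Fintype.card V).descFactorial (Fintype.card ι) : ℝ) := by
  rw [prob_pattern hsum, prod_subset (subset_univ S)]
  intro k _ hk
  have hempty : #{t | c t = k} = 0 :=
    card_eq_zero.mpr (filter_eq_empty_iff.mpr fun t _ htk => hk (htk ▸ hc t))
  rw [hempty, Nat.descFactorial_zero]

end Probability

lemma natCast_descFactorial_eq_prod (a k : ℕ) :
    (a.descFactorial k : ℝ) = ∏ t ∈ range k, ((a : ℝ) - t) := by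
  rw [← descPochhammer_eval_eq_descFactorial, descPochhammer_eval_eq_prod_range]

section Patterns

variable {n : Fin K → ℕ} {i j : Fin K} {a b c d : V}

local notation "N" => (Fintype.card V : ℝ)

lemma prob_pattern_ii (hsum : ∑ k, n k = Fintype.card V) (hab : a ≠ b) :
    prob n (fun f => f a = i ∧ f b = i) = n i * (n i - 1) / (N * (N - 1)) := by
  have hinj : Function.Injective ![a, b] := by
    simp only [Matrix.vecCons, Fin.cons_injective_iff]
    simp [hab, Function.Injective, eq_iff_true_of_subsingleton]
  convert prob_pattern_of_mem hsum ![i, i] ⟨_, hinj⟩ {i} (by simp [Fin.forall_fin_two]) using 2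
  · simp [Fin.forall_fin_two]
  · rw [prod_singleton, natCast_descFactorial_eq_prod, card_filter, Fin.sum_univ_two]
    simp [prod_range_succ]
  · rw [natCast_descFactorial_eq_prod]
    simp [prod_range_succ]

lemma prob_pattern_ij (hsum : ∑ k, n k = Fintype.card V) (hij : i ≠ j) (hab : a ≠ b) :
    prob n (fun f => f a = i ∧ f b = j) = n i * n j / (N * (N - 1)) := by
  have hinj : Function.Injective ![a, b] := by
    simp only [Matrix.vecCons, Fin.cons_injective_iff]
    simp [hab, Function.Injective, eq_iff_true_of_subsingleton]
  convert prob_pattern_of_mem hsum ![i, j] ⟨_, hinj⟩ {i, j} (by simp [Fin.forall_fin_two])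
    using 2
  · simp [Fin.forall_fin_two]
  · rw [prod_pair hij, Nat.cast_mul, natCast_descFactorial_eq_prod,
      natCast_descFactorial_eq_prod, card_filter, card_filter, Fin.sum_univ_two, Fin.sum_univ_two]
    simp [hij, hij.symm]
  · rw [natCast_descFactorial_eq_prod]
    simp [prod_range_succ]

lemma prob_pattern_iij (hsum : ∑ k, n k = Fintype.card V) (hij : i ≠ j) (hab : a ≠ b)
    (hac : a ≠ c) (hbc : b ≠ c) :
    prob n (fun f => f a = i ∧ f b = i ∧ f c = j)
      = n i * (n i - 1) * n j / (N * (N - 1) * (N - 2)) := by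
  have hinj : Function.Injective ![a, b, c] := by
    simp only [Matrix.vecCons, Fin.cons_injective_iff]
    simp [hab, hac, hbc, Function.Injective, eq_iff_true_of_subsingleton]
  convert prob_pattern_of_mem hsum ![i, i, j] ⟨_, hinj⟩ {i, j} (by simp [Fin.forall_fin_succ])
    using 2
  · simp [Fin.forall_fin_succ]
  · rw [prod_pair hij, Nat.cast_mul, natCast_descFactorial_eq_prod,
      natCast_descFactorial_eq_prod, card_filter, card_filter, Fin.sum_univ_three,
      Fin.sum_univ_three]
    simp [hij, hij.symm, prod_range_succ]
  · rw [natCast_descFactorial_eq_prod]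
    simp [prod_range_succ]

lemma prob_pattern_iiij (hsum : ∑ k, n k = Fintype.card V) (hij : i ≠ j) (hab : a ≠ b)
    (hac : a ≠ c) (had : a ≠ d) (hbc : b ≠ c) (hbd : b ≠ d) (hcd : c ≠ d) :
    prob n (fun f => f a = i ∧ f b = i ∧ f c = i ∧ f d = j)
      = n i * (n i - 1) * (n i - 2) * n j / (N * (N - 1) * (N - 2) * (N - 3)) := by
  have hinj : Function.Injective ![a, b, c, d] := by
    simp only [Matrix.vecCons, Fin.cons_injective_iff]
    simp [hab, hac, had, hbc, hbd, hcd, Function.Injective, eq_iff_true_of_subsingleton]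
  convert prob_pattern_of_mem hsum ![i, i, i, j] ⟨_, hinj⟩ {i, j}
    (by simp [Fin.forall_fin_succ]) using 2
  · simp [Fin.forall_fin_succ]
  · rw [prod_pair hij, Nat.cast_mul, natCast_descFactorial_eq_prod,
      natCast_descFactorial_eq_prod, card_filter, card_filter, Fin.sum_univ_four,
      Fin.sum_univ_four]
    simp [hij, hij.symm, prod_range_succ]
  · rw [natCast_descFactorial_eq_prod]
    simp [prod_range_succ]

end Patterns

section Darts

open SimpleGraph

variable (G : SimpleGraph V) [DecidableRel G.Adj]

lemma two_mul_Rcount (f : V → Fin K) (i j : Fin K) :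
    2 * Rcount G f i j = #{d : G.Dart | Sym2.map f d.edge = s(i, j)} := by
  rw [card_eq_sum_card_fiberwise (f := Dart.edge)
      (t := {e ∈ G.edgeFinset | Sym2.map f e = s(i, j)}),
    Rcount, mul_comm, ← smul_eq_mul, ← sum_const]
  · refine sum_congr rfl fun e he => ?_
    rw [mem_filter, mem_edgeFinset] at he
    rw [filter_filter, ← G.dart_edge_fiber_card e he.1]
    congr 1
    ext d
    simp only [mem_filter, mem_univ, true_and]
    exact ⟨fun h => ⟨h ▸ he.2, h⟩, And.right⟩
  · intro d hd
    simp only [coe_filter, mem_univ, true_and, Set.mem_ofPred_eq, mem_edgeFinset] at hd ⊢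
    exact ⟨d.edge_mem, hd⟩

lemma two_mul_Rcount_self (f : V → Fin K) (i : Fin K) :
    2 * Rcount G f i i = #{d : G.Dart | f d.fst = i ∧ f d.snd = i} := by
  rw [two_mul_Rcount]
  congr 1
  ext d
  simp [Dart.edge]

lemma Rcount_of_ne (f : V → Fin K) {i j : Fin K} (hij : i ≠ j) :
    Rcount G f i j = #{d : G.Dart | f d.fst = i ∧ f d.snd = j} := by
  have hsplit := two_mul_Rcount G f i j
  have hor : #{d : G.Dart | Sym2.map f d.edge = s(i, j)}
      = #{d : G.Dart | f d.fst = i ∧ f d.snd = j}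
        + #{d : G.Dart | f d.fst = j ∧ f d.snd = i} := by
    rw [← card_union_of_disjoint, ← filter_or]
    · congr 1
      ext d
      simp [Dart.edge]
    · exact disjoint_filter.mpr fun d _ h h' => hij (h.1.symm.trans h'.1)
  have hsymm : #{d : G.Dart | f d.fst = j ∧ f d.snd = i}
      = #{d : G.Dart | f d.fst = i ∧ f d.snd = j} :=
    card_equiv (Dart.symm_involutive.toPerm _) (by simp [and_comm])
  omega

lemma sum_dart_fst_eq {M : Type*} [AddCommMonoid M] (g : V → M) :
    ∑ d : G.Dart, g d.fst = ∑ v, G.degree v • g v := by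
  rw [← sum_fiberwise univ fun d : G.Dart => d.fst]
  refine sum_congr rfl fun v _ => ?_
  rw [sum_congr rfl fun d hd => congrArg g (mem_filter.mp hd).2, sum_const,
    G.dart_fst_fiber_card_eq_degree]

lemma card_dart_fst_eq_or {a b : V} (hab : a ≠ b) :
    #{d : G.Dart | d.fst = a ∨ d.fst = b} = G.degree a + G.degree b := by
  rw [filter_or,
    card_union_of_disjoint (disjoint_filter.mpr fun _ _ ha hb => hab (ha.symm.trans hb)),
    G.dart_fst_fiber_card_eq_degree, G.dart_fst_fiber_card_eq_degree]

lemma card_darts_within_dart_ends (d : G.Dart) :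
    #{d' : G.Dart | (d'.fst = d.fst ∨ d'.fst = d.snd) ∧ (d'.snd = d.fst ∨ d'.snd = d.snd)}
      = 2 := by
  have hpair : ({d' : G.Dart | (d'.fst = d.fst ∨ d'.fst = d.snd)
      ∧ (d'.snd = d.fst ∨ d'.snd = d.snd)} : Finset G.Dart) = {d, d.symm} := by
    ext d'
    simp only [mem_filter, mem_univ, true_and, mem_insert, mem_singleton, Dart.ext_iff,
      Prod.ext_iff, Dart.symm_toProd, Prod.fst_swap, Prod.snd_swap]
    constructor
    · rintro ⟨h₁ | h₁, h₂ | h₂⟩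
      · exact absurd (h₁.trans h₂.symm) d'.fst_ne_snd
      · exact .inl ⟨h₁, h₂⟩
      · exact .inr ⟨h₁, h₂⟩
      · exact absurd (h₁.trans h₂.symm) d'.fst_ne_snd
    · rintro (⟨h₁, h₂⟩ | ⟨h₁, h₂⟩) <;> simp [h₁, h₂]
  rw [hpair, card_pair d.symm_ne.symm]

end Darts

section Covariance

open SimpleGraph

variable (G : SimpleGraph V) [DecidableRel G.Adj] {n : Fin K → ℕ} {i j : Fin K}

local notation "N" => (Fintype.card V : ℝ)

lemma sum_prob_dart_pair (hsum : ∑ k, n k = Fintype.card V) (hij : i ≠ j) (d : G.Dart) :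
    ∑ d' : G.Dart,
        prob n (fun f => (f d.fst = i ∧ f d.snd = i) ∧ (f d'.fst = i ∧ f d'.snd = j))
      = ((G.degree d.fst + G.degree d.snd : ℝ) - 2)
          * (n i * (n i - 1) * n j / (N * (N - 1) * (N - 2)))
        + (2 * #G.edgeFinset - 2 * (G.degree d.fst + G.degree d.snd : ℝ) + 2)
          * (n i * (n i - 1) * (n i - 2) * n j / (N * (N - 1) * (N - 2) * (N - 3))) := by
  set p₃ : ℝ := n i * (n i - 1) * n j / (N * (N - 1) * (N - 2))
  set p₄ : ℝ := n i * (n i - 1) * (n i - 2) * n j / (N * (N - 1) * (N - 2) * (N - 3))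
  let x : G.Dart → ℝ := fun d' => if d'.fst = d.fst ∨ d'.fst = d.snd then 1 else 0
  let y : G.Dart → ℝ := fun d' => if d'.snd = d.fst ∨ d'.snd = d.snd then 1 else 0
  -- `d'` contributes `0`, `p₃` or `p₄` as it ends in, only starts in, or avoids
  -- `{d.fst, d.snd}`
  have hterm : ∀ d' : G.Dart,
      prob n (fun f => (f d.fst = i ∧ f d.snd = i) ∧ (f d'.fst = i ∧ f d'.snd = j))
        = p₃ * (x d' - x d' * y d') + p₄ * (1 - x d' - y d' + x d' * y d') := by
    intro d'
    by_cases hy : d'.snd = d.fst ∨ d'.snd = d.snd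
    · rw [prob_eq_zero_of_forall_not]
      · simp [x, y, hy]
      · rintro f ⟨⟨ha, hb⟩, -, he⟩
        rcases hy with hy | hy
        · exact hij (ha.symm.trans (hy ▸ he))
        · exact hij (hb.symm.trans (hy ▸ he))
    rw [not_or] at hy
    by_cases hx : d'.fst = d.fst ∨ d'.fst = d.snd
    · rw [prob_congr (Q := fun f => f d.fst = i ∧ f d.snd = i ∧ f d'.snd = j),
        prob_pattern_iij hsum hij d.fst_ne_snd (Ne.symm hy.1) (Ne.symm hy.2)]
      · simp [x, y, hx, hy, p₃]
      · intro f
        rcases hx with hx | hx <;> rw [hx] <;> tauto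
    · rw [not_or] at hx
      rw [prob_congr (Q := fun f => f d.fst = i ∧ f d.snd = i ∧ f d'.fst = i ∧ f d'.snd = j)
          fun f => and_assoc,
        prob_pattern_iiij hsum hij d.fst_ne_snd (Ne.symm hx.1) (Ne.symm hy.1) (Ne.symm hx.2)
          (Ne.symm hy.2) d'.fst_ne_snd]
      simp [x, y, hx, hy, p₄]
  have hx : ∑ d', x d' = G.degree d.fst + G.degree d.snd := by
    simp only [x, sum_boole, card_dart_fst_eq_or G d.fst_ne_snd]
    push_cast
    rfl
  have hy : ∑ d', y d' = G.degree d.fst + G.degree d.snd := by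
    rw [← hx, ← Dart.symm_involutive.bijective.sum_comp x]
    rfl
  have hxy : ∑ d', x d' * y d' = 2 := by
    simp only [x, y, ite_zero_mul_ite_zero, mul_one, sum_boole, card_darts_within_dart_ends]
    norm_num
  have hone : ∑ _d' : G.Dart, (1 : ℝ) = 2 * #G.edgeFinset := by
    simp [dart_card_eq_twice_card_edges]
  simp only [hterm, sum_add_distrib, sum_sub_distrib, ← mul_sum, hx, hy, hxy, hone]
  ring

lemma natCast_Rcount_self (f : V → Fin K) (i : Fin K) :
    (Rcount G f i i : ℝ)
      = 2⁻¹ * ∑ d : G.Dart, if f d.fst = i ∧ f d.snd = i then 1 else 0 := by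
  rw [← natCast_card_filter, ← two_mul_Rcount_self]
  push_cast
  ring

lemma natCast_Rcount_of_ne (f : V → Fin K) (hij : i ≠ j) :
    (Rcount G f i j : ℝ) = ∑ d : G.Dart, if f d.fst = i ∧ f d.snd = j then 1 else 0 := by
  rw [← natCast_card_filter, Rcount_of_ne G f hij]

lemma expect_Rcount_self (hsum : ∑ k, n k = Fintype.card V) (i : Fin K) :
    expect n (fun f => (Rcount G f i i : ℝ))
      = #G.edgeFinset * n i * (n i - 1) / (N * (N - 1)) := by
  simp only [natCast_Rcount_self, expect_const_mul, expect_sum, expect_indicator]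
  rw [sum_congr rfl fun d _ => prob_pattern_ii hsum d.fst_ne_snd, sum_const, card_univ,
    dart_card_eq_twice_card_edges, nsmul_eq_mul]
  push_cast
  ring

lemma expect_Rcount_of_ne (hsum : ∑ k, n k = Fintype.card V) (hij : i ≠ j) :
    expect n (fun f => (Rcount G f i j : ℝ)) = 2 * #G.edgeFinset * n i * n j / (N * (N - 1)) := by
  simp only [natCast_Rcount_of_ne G _ hij, expect_sum, expect_indicator]
  rw [sum_congr rfl fun d _ => prob_pattern_ij hsum hij d.fst_ne_snd, sum_const, card_univ,
    dart_card_eq_twice_card_edges, nsmul_eq_mul]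
  push_cast
  ring

lemma sum_dart_degree_fst :
    ∑ d : G.Dart, (G.degree d.fst : ℝ) = ∑ v, (G.degree v : ℝ) ^ 2 := by
  simp only [sum_dart_fst_eq G fun v => (G.degree v : ℝ), nsmul_eq_mul, sq]

lemma sum_dart_degree_snd :
    ∑ d : G.Dart, (G.degree d.snd : ℝ) = ∑ v, (G.degree v : ℝ) ^ 2 :=
  (Dart.symm_involutive.bijective.sum_comp fun d : G.Dart => (G.degree d.fst : ℝ)).trans
    (sum_dart_degree_fst G)

lemma expect_Rcount_self_mul_Rcount (hsum : ∑ k, n k = Fintype.card V) (hij : i ≠ j) :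
    expect n (fun f => (Rcount G f i i : ℝ) * Rcount G f i j)
      = (∑ v, (G.degree v : ℝ) ^ 2 - 2 * #G.edgeFinset)
          * (n i * (n i - 1) * n j / (N * (N - 1) * (N - 2)))
        + 2 * ((#G.edgeFinset : ℝ) ^ 2 - ∑ v, (G.degree v : ℝ) ^ 2 + #G.edgeFinset)
          * (n i * (n i - 1) * (n i - 2) * n j / (N * (N - 1) * (N - 2) * (N - 3))) := by
  have hR : ∀ f, (Rcount G f i i : ℝ) * Rcount G f i j
      = 2⁻¹ * ∑ d : G.Dart, ∑ d' : G.Dart,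
        if (f d.fst = i ∧ f d.snd = i) ∧ (f d'.fst = i ∧ f d'.snd = j) then 1 else 0 := by
    intro f
    rw [natCast_Rcount_self, natCast_Rcount_of_ne G f hij, mul_assoc, sum_mul_sum]
    simp only [ite_zero_mul_ite_zero, mul_one]
  simp only [hR, expect_const_mul, expect_sum, expect_indicator]
  rw [sum_congr rfl fun d _ => sum_prob_dart_pair G hsum hij d]
  simp only [sum_add_distrib, ← sum_mul, sum_sub_distrib, ← mul_sum, sum_dart_degree_fst,
    sum_dart_degree_snd, sum_const, card_univ, dart_card_eq_twice_card_edges, nsmul_eq_mul]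
  push_cast
  ring

end Covariance

theorem stmt_11_general (G : SimpleGraph V) [DecidableRel G.Adj]
    (n : Fin K → ℕ) (N : ℕ) (hN : N = Fintype.card V)
    (hsum : ∑ k, n k = N) (i j : Fin K) (hij : i ≠ j)
    (m D : ℝ) (hm : m = (G.edgeFinset.card : ℝ))
    (hD : D = ∑ t : V, (G.degree t : ℝ) ^ 2) :
    covar n (fun f : V → Fin K => (Rcount G f i i : ℝ))
        (fun f : V → Fin K => (Rcount G f i j : ℝ))
      = (D - 2 * m) * ((n i : ℝ) * (n j : ℝ) * ((n i : ℝ) - 1)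
            / ((N : ℝ) * ((N : ℝ) - 1) * ((N : ℝ) - 2)))
        + 2 * (m ^ 2 - D + m) * ((n i : ℝ) * (n j : ℝ) * ((n i : ℝ) - 1) * ((n i : ℝ) - 2)
            / ((N : ℝ) * ((N : ℝ) - 1) * ((N : ℝ) - 2) * ((N : ℝ) - 3)))
        - (m * (n i : ℝ) * ((n i : ℝ) - 1) / ((N : ℝ) * ((N : ℝ) - 1)))
          * (2 * m * (n i : ℝ) * (n j : ℝ) / ((N : ℝ) * ((N : ℝ) - 1))) := by
  subst hN hm hD
  rw [covar_eq_expect_mul_sub, expect_Rcount_self_mul_Rcount G hsum hij,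
    expect_Rcount_self G hsum, expect_Rcount_of_ne G hsum hij]
  ring

theorem stmt_11 (G : SimpleGraph V) [DecidableRel G.Adj]
    (n : Fin K → ℕ) (N : ℕ) (hN : N = Fintype.card V) (hN4 : 4 ≤ N)
    (hsum : ∑ k, n k = N) (i j : Fin K) (hij : i ≠ j)
    (m D : ℝ) (hm : m = (G.edgeFinset.card : ℝ))
    (hD : D = ∑ t : V, (G.degree t : ℝ) ^ 2) :
    covar n (fun f : V → Fin K => (Rcount G f i i : ℝ))
        (fun f : V → Fin K => (Rcount G f i j : ℝ))
      = (D - 2 * m) * ((n i : ℝ) * (n j : ℝ) * ((n i : ℝ) - 1)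
            / ((N : ℝ) * ((N : ℝ) - 1) * ((N : ℝ) - 2)))
        + 2 * (m ^ 2 - D + m) * ((n i : ℝ) * (n j : ℝ) * ((n i : ℝ) - 1) * ((n i : ℝ) - 2)
            / ((N : ℝ) * ((N : ℝ) - 1) * ((N : ℝ) - 2) * ((N : ℝ) - 3)))
        - (m * (n i : ℝ) * ((n i : ℝ) - 1) / ((N : ℝ) * ((N : ℝ) - 1)))
          * (2 * m * (n i : ℝ) * (n j : ℝ) / ((N : ℝ) * ((N : ℝ) - 1))) :=
  stmt_11_general G n N hN hsum i j hij m D hm hD
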